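/- arXiv:1405.6476 — 2 statements merged into one kernel-verified Lean document; each statement's English description precedes it below -/
import Mathlib

section
/- If A and B are 2n×2n real matrices admitting symplectic dilations of orders 2(n+ℓ) and 2(n+m) respectively, then the product AB admits a symplectic dilation of order 2(n+ℓ+m). -/
open Matrix

/-- The 2x2 matrix J₂ = [[0,-1],[1,0]]. -/
def J2 : Matrix (Fin 2) (Fin 2) ℝ := !![0, -1; 1, 0]

/-- The 2n x 2n block-diagonal matrix with n diagonal blocks J₂. -/
def J (n : ℕ) : Matrix (Fin (2*n)) (Fin (2*n)) ℝ :=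
  Matrix.of fun i j =>
    if i.val = j.val + 1 ∧ j.val % 2 = 0 then 1
    else if j.val = i.val + 1 ∧ i.val % 2 = 0 then -1 else 0

/-!
Let `L_A`, `L_B` be dilations of `A`, `B`. Extend `L_A` by the identity on the `2m` extra
coordinates of `L_B`, and `L_B` by the identity on the `2ℓ` extra coordinates of `L_A`. Both
extensions preserve the block-diagonal form, hence so does their product. Its top-left block is
`AB`: the off-diagonal blocks of `L_A` live in the `2ℓ` coordinates, where the extension of `L_B`
has no off-diagonal block.
-/

namespace Matrix

variable {R : Type*} [CommSemiring R] {ι α β : Type*}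

def PreservesForm [Fintype ι] (K L : Matrix ι ι R) : Prop := Lᵀ * K * L = K

theorem PreservesForm.mul [Fintype ι] {K L M : Matrix ι ι R}
    (hL : PreservesForm K L) (hM : PreservesForm K M) : PreservesForm K (L * M) :=
  calc (L * M)ᵀ * K * (L * M) = Mᵀ * (Lᵀ * K * L) * M := by
        simp only [transpose_mul, Matrix.mul_assoc]
    _ = K := by rw [hL, hM]

theorem PreservesForm.fromBlocks_one [Fintype ι] [Fintype α] [DecidableEq α]
    {K L : Matrix ι ι R} (hL : PreservesForm K L) (K' : Matrix α α R) :
    PreservesForm (fromBlocks K 0 0 K') (fromBlocks L 0 0 1) := by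
  rw [PreservesForm] at hL ⊢
  simp [fromBlocks_transpose, fromBlocks_multiply, hL]

theorem PreservesForm.submatrix [Fintype ι] [Fintype α] {K L : Matrix ι ι R}
    (hL : PreservesForm K L) (e : α ≃ ι) :
    PreservesForm (K.submatrix e e) (L.submatrix e e) := by
  rw [PreservesForm, transpose_submatrix, submatrix_mul_equiv _ _ _ e,
    submatrix_mul_equiv _ _ _ e, hL]

def padRight (L : Matrix (ι ⊕ α) (ι ⊕ α) R) (β : Type*) [DecidableEq β] :
    Matrix (ι ⊕ (α ⊕ β)) (ι ⊕ (α ⊕ β)) R :=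
  (fromBlocks L 0 0 (1 : Matrix β β R)).submatrix (Equiv.sumAssoc ι α β).symm
    (Equiv.sumAssoc ι α β).symm

def sumAssocSwap (ι α β : Type*) : ι ⊕ (α ⊕ β) ≃ (ι ⊕ β) ⊕ α :=
  ((Equiv.refl ι).sumCongr (Equiv.sumComm α β)).trans (Equiv.sumAssoc ι β α).symm

def padMiddle (L : Matrix (ι ⊕ β) (ι ⊕ β) R) (α : Type*) [DecidableEq α] :
    Matrix (ι ⊕ (α ⊕ β)) (ι ⊕ (α ⊕ β)) R :=
  (fromBlocks L 0 0 (1 : Matrix α α R)).submatrix (sumAssocSwap ι α β) (sumAssocSwap ι α β)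

variable [Fintype ι] [Fintype α] [Fintype β]

theorem PreservesForm.padRight [DecidableEq β] {K : Matrix ι ι R} {Kα : Matrix α α R}
    {L : Matrix (ι ⊕ α) (ι ⊕ α) R} (hL : PreservesForm (fromBlocks K 0 0 Kα) L)
    (Kβ : Matrix β β R) :
    PreservesForm (fromBlocks K 0 0 (fromBlocks Kα 0 0 Kβ)) (L.padRight β) := by
  have hK : (fromBlocks (fromBlocks K 0 0 Kα) 0 0 Kβ).submatrix (Equiv.sumAssoc ι α β).symm
      (Equiv.sumAssoc ι α β).symm = fromBlocks K 0 0 (fromBlocks Kα 0 0 Kβ) := by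
    ext (i | i | i) (j | j | j) <;> rfl
  have hLβ := (hL.fromBlocks_one Kβ).submatrix (Equiv.sumAssoc ι α β).symm
  rwa [hK] at hLβ

theorem PreservesForm.padMiddle [DecidableEq α] {K : Matrix ι ι R} {Kβ : Matrix β β R}
    {L : Matrix (ι ⊕ β) (ι ⊕ β) R} (hL : PreservesForm (fromBlocks K 0 0 Kβ) L)
    (Kα : Matrix α α R) :
    PreservesForm (fromBlocks K 0 0 (fromBlocks Kα 0 0 Kβ)) (L.padMiddle α) := by
  have hK : (fromBlocks (fromBlocks K 0 0 Kβ) 0 0 Kα).submatrix (sumAssocSwap ι α β)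
      (sumAssocSwap ι α β) = fromBlocks K 0 0 (fromBlocks Kα 0 0 Kβ) := by
    ext (i | i | i) (j | j | j) <;> rfl
  have hLα := (hL.fromBlocks_one Kα).submatrix (sumAssocSwap ι α β)
  rwa [hK] at hLα

theorem toBlocks₁₁_padRight_mul_padMiddle [DecidableEq α] [DecidableEq β]
    (LA : Matrix (ι ⊕ α) (ι ⊕ α) R) (LB : Matrix (ι ⊕ β) (ι ⊕ β) R) :
    (LA.padRight β * LB.padMiddle α).toBlocks₁₁ = LA.toBlocks₁₁ * LB.toBlocks₁₁ := by
  ext i j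
  simp [padRight, padMiddle, sumAssocSwap, toBlocks₁₁, Matrix.mul_apply, Fintype.sum_sum_type]

def HasDilation (K : Matrix ι ι R) (Kα : Matrix α α R) (A : Matrix ι ι R) : Prop :=
  ∃ (P : Matrix ι α R) (Q : Matrix α ι R) (S : Matrix α α R),
    PreservesForm (fromBlocks K 0 0 Kα) (fromBlocks A P Q S)

theorem HasDilation.mul [DecidableEq α] [DecidableEq β] {K : Matrix ι ι R} {Kα : Matrix α α R}
    {Kβ : Matrix β β R} {A B : Matrix ι ι R} (hA : HasDilation K Kα A) (hB : HasDilation K Kβ B) :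
    HasDilation K (fromBlocks Kα 0 0 Kβ) (A * B) := by
  obtain ⟨PA, QA, SA, hLA⟩ := hA
  obtain ⟨PB, QB, SB, hLB⟩ := hB
  set L := (fromBlocks A PA QA SA).padRight β * (fromBlocks B PB QB SB).padMiddle α
  have hL₁₁ : L.toBlocks₁₁ = A * B := by
    rw [toBlocks₁₁_padRight_mul_padMiddle, toBlocks_fromBlocks₁₁, toBlocks_fromBlocks₁₁]
  refine ⟨L.toBlocks₁₂, L.toBlocks₂₁, L.toBlocks₂₂, ?_⟩
  rw [← hL₁₁, fromBlocks_toBlocks]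
  exact (hLA.padRight Kβ).mul (hLB.padMiddle Kα)

end Matrix

/-- If A and B admit symplectic dilations of orders 2(n+l) and 2(n+m), then AB admits
a symplectic dilation of order 2(n+l+m). -/
theorem product_symplectic_dilation {n l m : ℕ}
    (A B : Matrix (Fin (2*n)) (Fin (2*n)) ℝ)
    (hA : ∃ (P : Matrix (Fin (2*n)) (Fin (2*l)) ℝ)
          (Q : Matrix (Fin (2*l)) (Fin (2*n)) ℝ)
          (R : Matrix (Fin (2*l)) (Fin (2*l)) ℝ),
        (Matrix.fromBlocks A P Q R)ᵀ * Matrix.fromBlocks (J n) 0 0 (J l) *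
          Matrix.fromBlocks A P Q R = Matrix.fromBlocks (J n) 0 0 (J l))
    (hB : ∃ (P : Matrix (Fin (2*n)) (Fin (2*m)) ℝ)
          (Q : Matrix (Fin (2*m)) (Fin (2*n)) ℝ)
          (R : Matrix (Fin (2*m)) (Fin (2*m)) ℝ),
        (Matrix.fromBlocks B P Q R)ᵀ * Matrix.fromBlocks (J n) 0 0 (J m) *
          Matrix.fromBlocks B P Q R = Matrix.fromBlocks (J n) 0 0 (J m)) :
    ∃ (P : Matrix (Fin (2*n)) (Fin (2*l) ⊕ Fin (2*m)) ℝ)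
      (Q : Matrix (Fin (2*l) ⊕ Fin (2*m)) (Fin (2*n)) ℝ)
      (R : Matrix (Fin (2*l) ⊕ Fin (2*m)) (Fin (2*l) ⊕ Fin (2*m)) ℝ),
        (Matrix.fromBlocks (A * B) P Q R)ᵀ *
          Matrix.fromBlocks (J n) 0 0 (Matrix.fromBlocks (J l) 0 0 (J m)) *
          Matrix.fromBlocks (A * B) P Q R =
        Matrix.fromBlocks (J n) 0 0 (Matrix.fromBlocks (J l) 0 0 (J m)) :=
  HasDilation.mul hA hB
end

section
/- If M = [[M₁₁, M₁₂],[M₂₁, M₂₂]] ∈ Sp(2(n+k)) (blocks of sizes 2n×2n, 2n×2k, 2k×2n, 2k×2k respectively) and S is a 2n×2n real matrix with 2S - iJ_{2n} ≥ 0, then the matrix S' = M₁₁^T S M₁₁ + ½ M₂₁^T M₂₁ satisfies 2S' - iJ_{2n} ≥ 0. -/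
/-!
The (1,1) block of `Mᵀ (J_{2n} ⊕ J_{2k}) M = J_{2n} ⊕ J_{2k}` reads
`M₁₁ᵀ J_{2n} M₁₁ + M₂₁ᵀ J_{2k} M₂₁ = J_{2n}`, so
`2S' - iJ_{2n} = M₁₁ᵀ (2S - iJ_{2n}) M₁₁ + M₂₁ᵀ (1 - iJ_{2k}) M₂₁`.
Both terms are congruences of positive semidefinite matrices: `1 - iJ` is Hermitian with
`(1 - iJ)² = 2(1 - iJ)` because `J² = -1`, hence `1 - iJ = ½ (1 - iJ)ᴴ (1 - iJ)`.
-/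

open Matrix
open scoped ComplexOrder

section

variable {m n p : Type*}

lemma transpose_mul_mul_add_transpose_mul_mul_of_fromBlocks {R : Type*} [Fintype m] [Fintype p]
    [CommRing R] {A : Matrix m m R} {B : Matrix m p R} {C : Matrix p m R} {D : Matrix p p R}
    {Ω₁ : Matrix m m R} {Ω₂ : Matrix p p R}
    (h : (fromBlocks A B C D)ᵀ * fromBlocks Ω₁ 0 0 Ω₂ * fromBlocks A B C D =
      fromBlocks Ω₁ 0 0 Ω₂) :
    Aᵀ * Ω₁ * A + Cᵀ * Ω₂ * C = Ω₁ := by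
  rw [fromBlocks_transpose, fromBlocks_multiply, fromBlocks_multiply] at h
  simpa using congrArg toBlocks₁₁ h

lemma map_ofReal_mul [Fintype n] (A : Matrix m n ℝ) (B : Matrix n p ℝ) :
    (A * B).map Complex.ofReal = A.map Complex.ofReal * B.map Complex.ofReal :=
  Matrix.map_mul (f := Complex.ofRealHom)

lemma conjTranspose_map_ofReal (A : Matrix m n ℝ) :
    (A.map Complex.ofReal)ᴴ = Aᵀ.map Complex.ofReal := by
  rw [← conjTranspose_map _ fun _ => by simp, conjTranspose_eq_transpose_of_trivial]

lemma posSemidef_one_sub_I_smul [Fintype m] [DecidableEq m] {K : Matrix m m ℂ}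
    (hK : Kᴴ = -K) (hK2 : K * K = -1) : (1 - Complex.I • K).PosSemidef := by
  set Q := 1 - Complex.I • K
  have hQ : Qᴴ = Q := by simp [Q, hK, Complex.conj_I]
  have hQ2 : Q * Q = (2 : ℂ) • Q := by
    simp only [Q, Matrix.mul_sub, Matrix.sub_mul, mul_one, one_mul, Algebra.mul_smul_comm,
      Algebra.smul_mul_assoc, hK2, smul_neg, sub_neg_eq_add, smul_add, smul_smul, Complex.I_mul_I,
      neg_smul, one_smul, two_smul]
    abel
  have hQ_eq : Q = (1 / 2 : ℂ) • (Qᴴ * Q) := by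
    rw [hQ, hQ2, smul_smul]; norm_num
  rw [hQ_eq]
  exact (posSemidef_conjTranspose_mul_self Q).smul (by norm_num [Complex.le_def])

/-- The uncertainty principle `2S - iΩ ≥ 0` for a real covariance matrix `S` with respect to the
symplectic form `Ω`. -/
def IsGaussianCovariance (Ω S : Matrix m m ℝ) : Prop :=
  ((2 : ℂ) • S.map Complex.ofReal - Complex.I • Ω.map Complex.ofReal).PosSemidef

namespace IsGaussianCovariance

variable {Ω S Ω' S' : Matrix m m ℝ}

lemma add (h : IsGaussianCovariance Ω S) (h' : IsGaussianCovariance Ω' S') :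
    IsGaussianCovariance (Ω + Ω') (S + S') := by
  unfold IsGaussianCovariance
  rw [Matrix.map_add _ Complex.ofReal_add, Matrix.map_add _ Complex.ofReal_add]
  convert Matrix.PosSemidef.add h h' using 1
  module

lemma transpose_mul_mul [Fintype m] [Finite p] (h : IsGaussianCovariance Ω S)
    (A : Matrix m p ℝ) : IsGaussianCovariance (Aᵀ * Ω * A) (Aᵀ * S * A) := by
  unfold IsGaussianCovariance
  convert h.conjTranspose_mul_mul_same (A.map Complex.ofReal) using 1
  simp only [conjTranspose_map_ofReal, map_ofReal_mul, Matrix.mul_sub, Matrix.sub_mul,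
    Matrix.mul_smul, Matrix.smul_mul]

end IsGaussianCovariance

lemma isGaussianCovariance_half_smul_one [Fintype m] [DecidableEq m] {Ω : Matrix m m ℝ}
    (hΩ : Ωᵀ = -Ω) (hΩ2 : Ω * Ω = -1) : IsGaussianCovariance Ω ((1 / 2 : ℝ) • 1) := by
  have hK : (Ω.map Complex.ofReal)ᴴ = -Ω.map Complex.ofReal := by
    rw [conjTranspose_map_ofReal, hΩ, Matrix.map_neg _ Complex.ofReal_neg]
  have hK2 : Ω.map Complex.ofReal * Ω.map Complex.ofReal = -1 := by
    rw [← map_ofReal_mul, hΩ2, Matrix.map_neg _ Complex.ofReal_neg,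
      Matrix.map_one _ Complex.ofReal_zero Complex.ofReal_one]
  unfold IsGaussianCovariance
  convert posSemidef_one_sub_I_smul hK hK2 using 2
  rw [Matrix.map_smul _ _ fun _ => Complex.ofReal_mul _ _,
    Matrix.map_one _ Complex.ofReal_zero Complex.ofReal_one]
  module

end

lemma J2_transpose : J2ᵀ = -J2 := by
  ext i j; fin_cases i <;> fin_cases j <;> simp [J2]

lemma J2_mul_self : J2 * J2 = -1 := by
  ext i j; fin_cases i <;> fin_cases j <;> simp [J2]

/-- `(b, a) ↦ b + 2a`, so that the pair `(2a, 2a + 1)` of coordinates forms the `a`-th block. -/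
def finTwoProdEquiv (n : ℕ) : Fin 2 × Fin n ≃ Fin (2 * n) :=
  (Equiv.prodComm _ _).trans (finProdFinEquiv.trans (finCongr (mul_comm n 2)))

lemma J_eq_reindex_blockDiagonal (n : ℕ) :
    J n = reindex (finTwoProdEquiv n) (finTwoProdEquiv n) (blockDiagonal fun _ => J2) := by
  ext i j
  obtain ⟨⟨b, a⟩, rfl⟩ := (finTwoProdEquiv n).surjective i
  obtain ⟨⟨b', a'⟩, rfl⟩ := (finTwoProdEquiv n).surjective j
  simp only [_root_.J, finTwoProdEquiv, reindex_apply, submatrix_apply,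
    blockDiagonal_apply, of_apply, Equiv.trans_apply, Equiv.prodComm_apply, Prod.fst_swap,
    Prod.snd_swap, finProdFinEquiv_apply_val, finCongr_apply, Fin.val_cast, Fin.ext_iff]
  fin_cases b <;> fin_cases b' <;> simp [J2] <;> split_ifs <;> first | rfl | omega

lemma J_transpose (n : ℕ) : (J n)ᵀ = -J n := by
  have h : (fun _ : Fin n => J2ᵀ) = -fun _ => J2 := funext fun _ => J2_transpose
  rw [J_eq_reindex_blockDiagonal, transpose_reindex, blockDiagonal_transpose, h,
    blockDiagonal_neg, reindex_apply, reindex_apply, submatrix_neg, Pi.neg_apply, Pi.neg_apply]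

lemma J_mul_self (n : ℕ) : J n * J n = -1 := by
  have h : (fun _ : Fin n => J2 * J2) = -1 := funext fun _ => J2_mul_self
  rw [J_eq_reindex_blockDiagonal, reindex_apply, submatrix_mul_equiv, ← blockDiagonal_mul, h,
    blockDiagonal_neg, blockDiagonal_one, submatrix_neg, Pi.neg_apply, Pi.neg_apply,
    submatrix_one_equiv]

/-- A symplectic Gaussian channel maps Gaussian covariance matrices to Gaussian
covariance matrices. -/
theorem symplectic_channel_preserves_gaussian_covariance {n k : ℕ}
    (M₁₁ : Matrix (Fin (2*n)) (Fin (2*n)) ℝ) (M₁₂ : Matrix (Fin (2*n)) (Fin (2*k)) ℝ)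
    (M₂₁ : Matrix (Fin (2*k)) (Fin (2*n)) ℝ) (M₂₂ : Matrix (Fin (2*k)) (Fin (2*k)) ℝ)
    (hM : (Matrix.fromBlocks M₁₁ M₁₂ M₂₁ M₂₂)ᵀ * Matrix.fromBlocks (J n) 0 0 (J k) *
        Matrix.fromBlocks M₁₁ M₁₂ M₂₁ M₂₂ = Matrix.fromBlocks (J n) 0 0 (J k))
    (S : Matrix (Fin (2*n)) (Fin (2*n)) ℝ)
    (hS : ((2 : ℂ) • S.map (Complex.ofReal) -
        Complex.I • (J n).map (Complex.ofReal)).PosSemidef) :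
    ((2 : ℂ) • ((M₁₁ᵀ * S * M₁₁ + (1/2 : ℝ) • (M₂₁ᵀ * M₂₁)).map (Complex.ofReal)) -
        Complex.I • (J n).map (Complex.ofReal)).PosSemidef := by
  have hvacuum : IsGaussianCovariance (J k) ((1 / 2 : ℝ) • 1) :=
    isGaussianCovariance_half_smul_one (J_transpose k) (J_mul_self k)
  have h := (IsGaussianCovariance.transpose_mul_mul hS M₁₁).add (hvacuum.transpose_mul_mul M₂₁)
  rwa [transpose_mul_mul_add_transpose_mul_mul_of_fromBlocks hM, Matrix.mul_smul, Matrix.mul_one,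
    Matrix.smul_mul] at h
end
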